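/- arXiv:2407.17320 — 2 statements merged into one kernel-verified Lean document; each statement's English description precedes it below -/
import Mathlib

section
/- Let K be a C-pseudo-cone in ℝⁿ that is smooth and strictly convex inside int C, and let F = -h_{K*} restricted to int C be its gauge function, which is differentiable on int C. Then for every x ∈ ∂K ∩ int C, the pair (x, -∇(½F²)(x)) is a crucial pair of K; that is, -∇(½F²)(x) is an outer normal vector of K at x and ⟨x, -∇(½F²)(x)⟩ = -1. -/
open Set Pointwise RealInnerProductSpace

noncomputable section

/-- The support function of a set `K ⊆ ℝⁿ`, with values in `ℝ ∪ {∞} ⊆ EReal`. -/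
def supportFn {n : ℕ} (K : Set (EuclideanSpace ℝ (Fin n))) (u : EuclideanSpace ℝ (Fin n)) :
    EReal :=
  sSup ((fun x => ((⟪u, x⟫ : ℝ) : EReal)) '' K)

/-- The copolar set `K* = {u : ⟨u,x⟩ ≤ -1 for all x ∈ K}`. -/
def copolar {n : ℕ} (K : Set (EuclideanSpace ℝ (Fin n))) : Set (EuclideanSpace ℝ (Fin n)) :=
  {u | ∀ x ∈ K, ⟪u, x⟫ ≤ (-1 : ℝ)}

/-- The dual cone `C° = {u : ⟨u,x⟩ ≤ 0 for all x ∈ C}`. -/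
def dualCone {n : ℕ} (C : Set (EuclideanSpace ℝ (Fin n))) : Set (EuclideanSpace ℝ (Fin n)) :=
  {u | ∀ x ∈ C, ⟪u, x⟫ ≤ (0 : ℝ)}

/-- The recession cone of `K`. -/
def recessionCone {n : ℕ} (K : Set (EuclideanSpace ℝ (Fin n))) :
    Set (EuclideanSpace ℝ (Fin n)) :=
  {y | ∀ x ∈ K, ∀ t : ℝ, 0 ≤ t → x + t • y ∈ K}

/-- A pseudo-cone: a nonempty closed convex set with `0 ∉ K` and `λK ⊆ K` for `λ ≥ 1`. -/
def IsPseudoCone {n : ℕ} (K : Set (EuclideanSpace ℝ (Fin n))) : Prop :=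
  K.Nonempty ∧ IsClosed K ∧ Convex ℝ K ∧ (0 : EuclideanSpace ℝ (Fin n)) ∉ K ∧
    ∀ lam : ℝ, 1 ≤ lam → lam • K ⊆ K

/-- A pointed closed convex cone with nonempty interior. -/
def IsPointedSolidClosedCone {n : ℕ} (C : Set (EuclideanSpace ℝ (Fin n))) : Prop :=
  IsClosed C ∧ Convex ℝ C ∧ (∀ lam : ℝ, 0 ≤ lam → lam • C ⊆ C) ∧
    (interior C).Nonempty ∧ C ∩ (-C) = {0}

/-- A `C`-pseudo-cone: a pseudo-cone whose recession cone is `C`, where `C` is a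
pointed closed convex cone with nonempty interior. -/
def IsCPseudoCone {n : ℕ} (C K : Set (EuclideanSpace ℝ (Fin n))) : Prop :=
  IsPointedSolidClosedCone C ∧ IsPseudoCone K ∧ recessionCone K = C

/-- `H` is a supporting hyperplane of `K`: `H = {y : ⟨u,y⟩ = c}` for some `u ≠ 0`, with
`K` on the side `⟨u,·⟩ ≤ c` and `H` touching `K`. -/
def IsSuppHyperplane {n : ℕ} (K H : Set (EuclideanSpace ℝ (Fin n))) : Prop :=
  ∃ (u : EuclideanSpace ℝ (Fin n)) (c : ℝ), u ≠ 0 ∧ H = {y | ⟪u, y⟫ = c} ∧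
    (∀ y ∈ K, ⟪u, y⟫ ≤ c) ∧ ∃ y ∈ K, ⟪u, y⟫ = c

/-- `K` is smooth inside `int C`: each boundary point of `K` lying in `int C` is contained
in a unique supporting hyperplane of `K`. -/
def SmoothInside {n : ℕ} (K C : Set (EuclideanSpace ℝ (Fin n))) : Prop :=
  ∀ x ∈ frontier K ∩ interior C,
    ∃! H : Set (EuclideanSpace ℝ (Fin n)), IsSuppHyperplane K H ∧ x ∈ H

/-- `K` is strictly convex inside `int C`: each boundary point of `K` lying in `int C`
admits a supporting hyperplane meeting `K` only in that point. -/
def StrictlyConvexInside {n : ℕ} (K C : Set (EuclideanSpace ℝ (Fin n))) : Prop :=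
  ∀ x ∈ frontier K ∩ interior C,
    ∃ H : Set (EuclideanSpace ℝ (Fin n)), IsSuppHyperplane K H ∧ H ∩ K = {x}

/-- `(x, xs)` is a crucial pair of `K`: `x ∈ ∂K`, `xs` is an outer normal vector of `K`
at `x`, and `⟨x, xs⟩ = -1`. -/
def IsCrucialPair {n : ℕ} (K : Set (EuclideanSpace ℝ (Fin n)))
    (x xs : EuclideanSpace ℝ (Fin n)) : Prop :=
  x ∈ frontier K ∧ (∀ y ∈ K, ⟪xs, y - x⟫ ≤ (0 : ℝ)) ∧ ⟪x, xs⟫ = (-1 : ℝ)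

open Topology

/-! Near `x ∈ int C` only a bounded part of `K*` matters for `h = h_{K*}`: `K*` lies in the dual
cone of `C = rec K`, so long vectors of `K*` have very negative inner product with every point
close to `x`. The support function of a compact set is differentiable wherever the maximizer of
`⟨·, x⟩` is unique, with that maximizer as gradient (Danskin). Smoothness of `K` at `x` says
exactly that the normalized outer normal `u` at `x`, with `⟨u, x⟩ = -1`, is the unique such
maximizer over `K*`. Hence `∇h(x) = u`, `h(x) = -1`, and `-∇(½ h²)(x) = -h(x) ∇h(x) = u`. -/

section Gradient

variable {E : Type*} [NormedAddCommGroup E] [InnerProductSpace ℝ E]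

theorem HasDerivAt.comp_hasGradientAt [CompleteSpace E] {f : E → ℝ} {g : ℝ → ℝ} {u x : E}
    {g' : ℝ} (hg : HasDerivAt g g' (f x)) (hf : HasGradientAt f u x) :
    HasGradientAt (g ∘ f) (g' • u) x := by
  rw [hasGradientAt_iff_hasFDerivAt] at hf ⊢
  simpa using hg.comp_hasFDerivAt x hf

theorem eventually_inner_le_inner_add_of_isCompact {S : Set E} {x u₀ : E} (hS : IsCompact S)
    (hu₀ : u₀ ∈ S) (hmax : ∀ u ∈ S, u ≠ u₀ → ⟪x, u⟫ < ⟪x, u₀⟫) {ε : ℝ} (hε : 0 < ε) :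
    ∀ᶠ y in 𝓝 x, ∀ u ∈ S, ⟪y, u⟫ ≤ ⟪y, u₀⟫ + ε * ‖y - x‖ := by
  have hgap_nonneg : ∀ u ∈ S, 0 ≤ ⟪x, u₀⟫ - ⟪x, u⟫ := fun u hu => by
    rcases eq_or_ne u u₀ with rfl | hne
    · simp
    · linarith [hmax u hu hne]
  obtain ⟨η, hη, hgap⟩ := (hS.diff Metric.isOpen_ball).exists_forall_le'
    (f := fun u => ⟪x, u₀⟫ - ⟪x, u⟫) (by fun_prop) fun u hu =>
      sub_pos.2 (hmax u hu.1 fun h => hu.2 (by rw [h]; exact Metric.mem_ball_self hε))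
  obtain ⟨R, hR⟩ := hS.isBounded.exists_norm_le
  have hdiam : ∀ u ∈ S, ‖u - u₀‖ ≤ 2 * R := fun u hu =>
    (norm_sub_le u u₀).trans (by linarith [hR u hu, hR u₀ hu₀])
  have hR0 : 0 ≤ R := (norm_nonneg u₀).trans (hR u₀ hu₀)
  filter_upwards [Metric.ball_mem_nhds x (div_pos hη (by positivity : 0 < 2 * R + 1))]
    with y hy u hu
  rw [Metric.mem_ball, dist_eq_norm, lt_div_iff₀ (by positivity)] at hy
  have hsplit : ⟪y, u⟫ - ⟪y, u₀⟫ = ⟪y - x, u - u₀⟫ - (⟪x, u₀⟫ - ⟪x, u⟫) := by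
    simp only [inner_sub_left, inner_sub_right]; ring
  have hcs := real_inner_le_norm (y - x) (u - u₀)
  -- far from `u₀`, the gap `η` on the compact set `S \ ball u₀ ε` absorbs `⟪y - x, u - u₀⟫`
  by_cases hnear : u ∈ Metric.ball u₀ ε
  · rw [Metric.mem_ball, dist_eq_norm] at hnear
    nlinarith [norm_nonneg (y - x), hgap_nonneg u hu]
  · nlinarith [norm_nonneg (y - x), hgap u ⟨hu, hnear⟩, hdiam u hu]

theorem hasGradientAt_sSup_inner_of_isCompact [CompleteSpace E] {S : Set E} {x u₀ : E}
    (hS : IsCompact S) (hu₀ : u₀ ∈ S) (hmax : ∀ u ∈ S, u ≠ u₀ → ⟪x, u⟫ < ⟪x, u₀⟫) :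
    HasGradientAt (fun y => sSup ((fun u => ⟪y, u⟫) '' S)) u₀ x := by
  have hbdd : ∀ y, BddAbove ((fun u => ⟪y, u⟫) '' S) := fun y =>
    (hS.image (continuous_const.inner continuous_id)).bddAbove
  have hσx : sSup ((fun u => ⟪x, u⟫) '' S) = ⟪x, u₀⟫ := by
    refine IsGreatest.csSup_eq ⟨mem_image_of_mem _ hu₀, forall_mem_image.2 fun u hu => ?_⟩
    rcases eq_or_ne u u₀ with rfl | hne
    · exact le_rfl
    · exact (hmax u hu hne).le
  rw [hasGradientAt_iff_isLittleO, Asymptotics.isLittleO_iff]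
  intro ε hε
  filter_upwards [eventually_inner_le_inner_add_of_isCompact hS hu₀ hmax hε] with y hy
  have hlow : ⟪y, u₀⟫ ≤ sSup ((fun u => ⟪y, u⟫) '' S) := le_csSup (hbdd y) (mem_image_of_mem _ hu₀)
  have hup : sSup ((fun u => ⟪y, u⟫) '' S) ≤ ⟪y, u₀⟫ + ε * ‖y - x‖ :=
    csSup_le ⟨_, mem_image_of_mem _ hu₀⟩ (forall_mem_image.2 hy)
  rw [hσx, Real.norm_eq_abs, abs_le, inner_sub_right, real_inner_comm x u₀,
    real_inner_comm y u₀]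
  constructor <;> nlinarith [norm_nonneg (y - x)]

theorem eq_of_setOf_inner_eq_neg_one {v w x : E} (hx : ⟪w, x⟫ = -1)
    (h : {y | ⟪v, y⟫ = -1} = {y | ⟪w, y⟫ = -1}) : v = w := by
  have hmem : ∀ y, ⟪v, y⟫ = -1 ↔ ⟪w, y⟫ = -1 := fun y => Set.ext_iff.1 h y
  have hvx : ⟪v, x⟫ = -1 := (hmem x).2 hx
  refine ext_inner_right ℝ fun y => ?_
  have key := (hmem ((1 + ⟪w, y⟫) • x + y)).2 (by
    rw [inner_add_right, real_inner_smul_right, hx]; ring)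
  rw [inner_add_right, real_inner_smul_right, hvx] at key
  linarith

end Gradient

section Copolar

variable {n : ℕ}

theorem mem_dualCone_recessionCone {K : Set (EuclideanSpace ℝ (Fin n))}
    {u : EuclideanSpace ℝ (Fin n)} {c : ℝ} (hne : K.Nonempty) (hK : ∀ y ∈ K, ⟪u, y⟫ ≤ c) :
    u ∈ dualCone (recessionCone K) := by
  intro z hz
  by_contra! hpos
  obtain ⟨y, hy⟩ := hne
  have hfar := hK _ (hz y hy ((c - ⟪u, y⟫ + 1) / ⟪u, z⟫)
    (div_nonneg (by linarith [hK y hy]) hpos.le))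
  rw [inner_add_right, real_inner_smul_right, div_mul_cancel₀ _ hpos.ne'] at hfar
  linarith

theorem copolar_subset_dualCone_recessionCone {K : Set (EuclideanSpace ℝ (Fin n))}
    (hne : K.Nonempty) : copolar K ⊆ dualCone (recessionCone K) :=
  fun _ hu => mem_dualCone_recessionCone hne hu

theorem mul_norm_le_neg_inner_of_closedBall_subset {C : Set (EuclideanSpace ℝ (Fin n))}
    {u y : EuclideanSpace ℝ (Fin n)} {δ : ℝ} (hδ : 0 ≤ δ) (hu : u ∈ dualCone C)
    (hball : Metric.closedBall y δ ⊆ C) : δ * ‖u‖ ≤ -⟪u, y⟫ := by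
  rcases eq_or_ne u 0 with rfl | hu0
  · simp
  have hnorm : 0 < ‖u‖ := norm_pos_iff.2 hu0
  have hmem : y + (δ / ‖u‖) • u ∈ Metric.closedBall y δ := by
    rw [Metric.mem_closedBall, dist_eq_norm, add_sub_cancel_left, norm_smul, Real.norm_eq_abs,
      abs_of_nonneg (by positivity), div_mul_cancel₀ _ hnorm.ne']
  have hle := hu _ (hball hmem)
  rw [inner_add_right, real_inner_smul_right, real_inner_self_eq_norm_sq] at hle
  have hsq : δ / ‖u‖ * ‖u‖ ^ 2 = δ * ‖u‖ := by field_simp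
  linarith

theorem exists_pos_forall_mul_norm_le_neg_inner {C : Set (EuclideanSpace ℝ (Fin n))}
    {x : EuclideanSpace ℝ (Fin n)} (hx : x ∈ interior C) :
    ∃ δ > 0, ∀ y ∈ Metric.ball x δ, ∀ u ∈ dualCone C, δ * ‖u‖ ≤ -⟪u, y⟫ := by
  obtain ⟨ε, hε, hball⟩ := Metric.nhds_basis_closedBall.mem_iff.1 (mem_interior_iff_mem_nhds.1 hx)
  refine ⟨ε / 2, by positivity, fun y hy u hu =>
    mul_norm_le_neg_inner_of_closedBall_subset (by positivity) hu (subset_trans ?_ hball)⟩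
  refine Metric.closedBall_subset_closedBall' ?_
  rw [Metric.mem_ball] at hy
  linarith

theorem isClosed_copolar (K : Set (EuclideanSpace ℝ (Fin n))) : IsClosed (copolar K) := by
  simp only [copolar, ofPred_forall]
  exact isClosed_biInter fun y _ => isClosed_le (by fun_prop) continuous_const

theorem supportFn_eq_of_isLUB {A : Set (EuclideanSpace ℝ (Fin n))}
    {y : EuclideanSpace ℝ (Fin n)} {a : ℝ} (h : IsLUB ((fun u => ⟪y, u⟫) '' A) a) :
    supportFn A y = a := by
  refine IsLUB.sSup_eq ⟨?_, fun b hb => ?_⟩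
  · rintro _ ⟨u, hu, rfl⟩
    exact EReal.coe_le_coe_iff.2 (h.1 ⟨u, hu, rfl⟩)
  induction b using EReal.rec with
  | bot =>
    obtain ⟨_, ⟨u, hu, rfl⟩⟩ := h.nonempty
    exact absurd (le_bot_iff.1 (hb ⟨u, hu, rfl⟩)) (EReal.coe_ne_bot _)
  | coe r =>
    exact EReal.coe_le_coe_iff.2 (h.2 (forall_mem_image.2 fun u hu =>
      EReal.coe_le_coe_iff.1 (hb ⟨u, hu, rfl⟩)))
  | top => exact le_top

theorem hasGradientAt_supportFn_of_subset_dualCone {A C : Set (EuclideanSpace ℝ (Fin n))}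
    {x u : EuclideanSpace ℝ (Fin n)} (hA : IsClosed A) (hAC : A ⊆ dualCone C)
    (hx : x ∈ interior C) (hu : u ∈ A) (hmax : ∀ v ∈ A, v ≠ u → ⟪x, v⟫ < ⟪x, u⟫) :
    HasGradientAt (fun y => (supportFn A y).toReal) u x := by
  obtain ⟨δ, hδ, hbound⟩ := exists_pos_forall_mul_norm_le_neg_inner hx
  -- vectors of `A` longer than `M` are beaten by `u` at every `y ∈ ball x δ` (see `hdom`)
  set M := ‖u‖ * (‖x‖ + δ) / δ
  set T := A ∩ Metric.closedBall 0 M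
  have hT : IsCompact T := (isCompact_closedBall 0 M).inter_left hA
  have huT : u ∈ T := by
    refine ⟨hu, mem_closedBall_zero_iff.2 ((le_div_iff₀ hδ).2 ?_)⟩
    have := hbound x (Metric.mem_ball_self hδ) u (hAC hu)
    nlinarith [neg_le_of_abs_le (abs_real_inner_le_norm u x), norm_nonneg u]
  refine (hasGradientAt_sSup_inner_of_isCompact hT huT fun v hv => hmax v hv.1)
    |>.congr_of_eventuallyEq ?_
  filter_upwards [Metric.ball_mem_nhds x hδ] with y hy
  have hLUB := (hT.image (f := fun v => ⟪y, v⟫) (by fun_prop)).isLUB_sSup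
    ⟨_, mem_image_of_mem _ huT⟩
  have hnorm_y : ‖y‖ ≤ ‖x‖ + δ := by
    rw [Metric.mem_ball, dist_eq_norm] at hy
    linarith [norm_le_norm_add_norm_sub' y x]
  have hdom : ∀ v ∈ A, M < ‖v‖ → ⟪y, v⟫ ≤ ⟪y, u⟫ := fun v hv hvM => by
    have hv_far := hbound y hy v (hAC hv)
    have hMδ : M * δ = ‖u‖ * (‖x‖ + δ) := div_mul_cancel₀ _ hδ.ne'
    rw [real_inner_comm y v] at hv_far
    nlinarith [neg_le_of_abs_le (abs_real_inner_le_norm y u), norm_nonneg u]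
  rw [supportFn_eq_of_isLUB (a := sSup ((fun v => ⟪y, v⟫) '' T)), EReal.toReal_coe]
  refine ⟨forall_mem_image.2 fun v hv => ?_,
    fun b hb => hLUB.2 (upperBounds_mono_set (image_mono inter_subset_left) hb)⟩
  by_cases hvM : ‖v‖ ≤ M
  · exact hLUB.1 ⟨v, ⟨hv, mem_closedBall_zero_iff.2 hvM⟩, rfl⟩
  · exact (hdom v hv (not_le.1 hvM)).trans (hLUB.1 ⟨u, huT, rfl⟩)

theorem isSuppHyperplane_setOf_inner_eq_neg_one {K : Set (EuclideanSpace ℝ (Fin n))}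
    {v x : EuclideanSpace ℝ (Fin n)} (hv : v ∈ copolar K) (hx : x ∈ K) (hvx : ⟪v, x⟫ = -1) :
    IsSuppHyperplane K {y | ⟪v, y⟫ = -1} :=
  ⟨v, -1, by rintro rfl; simp at hvx, rfl, hv, x, hx, hvx⟩

theorem exists_mem_copolar_forall_inner_lt {C K : Set (EuclideanSpace ℝ (Fin n))}
    (hrec : recessionCone K = C) (hsm : SmoothInside K C) {x : EuclideanSpace ℝ (Fin n)}
    (hx : x ∈ frontier K ∩ interior C) (hxK : x ∈ K) :
    ∃ u ∈ copolar K, ⟪x, u⟫ = -1 ∧ ∀ v ∈ copolar K, v ≠ u → ⟪x, v⟫ < -1 := by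
  obtain ⟨_, ⟨⟨w, c, hw0, rfl, hKw, -⟩, hxw⟩, -⟩ := hsm x hx
  rw [mem_ofPred_eq] at hxw
  have hc : c < 0 := by
    have hwC : w ∈ dualCone C := hrec ▸ mem_dualCone_recessionCone ⟨x, hxK⟩ hKw
    obtain ⟨δ, hδ, hbound⟩ := exists_pos_forall_mul_norm_le_neg_inner hx.2
    have := hbound x (Metric.mem_ball_self hδ) w hwC
    nlinarith [mul_pos hδ (norm_pos_iff.2 hw0)]
  have hu : (-c)⁻¹ • w ∈ copolar K := fun y hy => by
    rw [real_inner_smul_left, inv_mul_le_iff₀ (by linarith)]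
    linarith [hKw y hy]
  have hux : ⟪(-c)⁻¹ • w, x⟫ = -1 := by
    rw [real_inner_smul_left, hxw, inv_neg, neg_mul, inv_mul_cancel₀ hc.ne]
  refine ⟨_, hu, real_inner_comm x _ ▸ hux, fun v hv hne => ?_⟩
  refine lt_of_le_of_ne (real_inner_comm x v ▸ hv x hxK) fun hvx => hne ?_
  rw [real_inner_comm] at hvx
  exact eq_of_setOf_inner_eq_neg_one hux ((hsm x hx).unique
    ⟨isSuppHyperplane_setOf_inner_eq_neg_one hv hxK hvx, hvx⟩
    ⟨isSuppHyperplane_setOf_inner_eq_neg_one hu hxK hux, hux⟩)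

theorem supportFn_copolar_eq_neg_one {K : Set (EuclideanSpace ℝ (Fin n))}
    {x u : EuclideanSpace ℝ (Fin n)} (hx : x ∈ K) (hu : u ∈ copolar K) (hxu : ⟪x, u⟫ = -1) :
    supportFn (copolar K) x = ((-1 : ℝ) : EReal) :=
  supportFn_eq_of_isLUB (IsGreatest.isLUB ⟨⟨u, hu, hxu⟩,
    forall_mem_image.2 fun v hv => real_inner_comm v x ▸ hv x hx⟩)

theorem isCrucialPair_of_mem_copolar {K : Set (EuclideanSpace ℝ (Fin n))}
    {x u : EuclideanSpace ℝ (Fin n)} (hx : x ∈ frontier K) (hu : u ∈ copolar K)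
    (hxu : ⟪x, u⟫ = -1) : IsCrucialPair K x u := by
  refine ⟨hx, fun y hy => ?_, hxu⟩
  rw [inner_sub_right, real_inner_comm x u, hxu]
  linarith [hu y hy]

end Copolar

theorem crucialPair_gradient_general {n : ℕ}
    (C K : Set (EuclideanSpace ℝ (Fin n))) (hK : IsCPseudoCone C K)
    (hsm : SmoothInside K C) :
    ∀ x ∈ frontier K ∩ interior C,
      IsCrucialPair K x
        (-(gradient (fun y =>
          (1 / 2) * (-(supportFn (copolar K) y).toReal) ^ 2) x)) := by
  obtain ⟨-, ⟨-, hKcl, -⟩, hrec⟩ := hK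
  intro x hx
  have hxK : x ∈ K := hKcl.frontier_subset hx.1
  obtain ⟨u, hu, hxu, hmax⟩ := exists_mem_copolar_forall_inner_lt hrec hsm hx hxK
  have hgrad : HasGradientAt (fun y => (supportFn (copolar K) y).toReal) u x :=
    hasGradientAt_supportFn_of_subset_dualCone (isClosed_copolar K)
      (hrec ▸ copolar_subset_dualCone_recessionCone ⟨x, hxK⟩) hx.2 hu
      (fun v hv hne => hxu ▸ hmax v hv hne)
  have hsq : HasDerivAt (fun t : ℝ => (1 / 2) * (-t) ^ 2) (-1)
      (supportFn (copolar K) x).toReal := by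
    rw [supportFn_copolar_eq_neg_one hxK hu hxu, EReal.toReal_coe]
    exact (((hasDerivAt_neg _).pow 2).const_mul (1 / 2)).congr_deriv (by norm_num)
  have hF : HasGradientAt (fun y => (1 / 2) * (-(supportFn (copolar K) y).toReal) ^ 2)
      ((-1 : ℝ) • u) x :=
    hsq.comp_hasGradientAt (f := fun y => (supportFn (copolar K) y).toReal) hgrad
  rw [hF.gradient, neg_one_smul, neg_neg]
  exact isCrucialPair_of_mem_copolar hx.1 hu hxu

/-- Let `K` be a `C`-pseudo-cone, smooth and strictly convex inside `int C`,
with gauge function `F = -h_{K*}` on `int C`. Then for every `x ∈ ∂K ∩ int C`,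
the pair `(x, -∇(½F²)(x))` is a crucial pair of `K`. -/
theorem crucialPair_gradient {n : ℕ}
    (C K : Set (EuclideanSpace ℝ (Fin n))) (hK : IsCPseudoCone C K)
    (hsm : SmoothInside K C) (hsc : StrictlyConvexInside K C) :
    ∀ x ∈ frontier K ∩ interior C,
      IsCrucialPair K x
        (-(gradient (fun y =>
          (1 / 2) * (-(supportFn (copolar K) y).toReal) ^ 2) x)) :=
  crucialPair_gradient_general C K hK hsm
end
end

section
/- Let U ⊆ ℝ^{n-1} be open, and let X : U → ℝⁿ \ {0} and N : U → ℝⁿ be continuously differentiable maps such that ‖N(u)‖ = 1, ⟨N(u), ∂_α X(u)⟩ = 0 for all α, and ⟨X(u), N(u)⟩ < 0 for all u ∈ U. Define X* = N/(-⟨X,N⟩) and N* = X/‖X‖. Then at every u ∈ U, det(N*, ∂₁X*, …, ∂_{n-1}X*) = (-1)ⁿ / (⟨X*,N*⟩ ⟨X,N⟩ⁿ) · det(N, ∂₁N, …, ∂_{n-1}N), where det(v₀, v₁, …, v_{n-1}) denotes the determinant of the n×n matrix with columns v₀, …, v_{n-1}. -/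
/-!
Write `φ = -⟪X, N⟫`, so that `X* = φ⁻¹ • N` and `N = φ • X*` near `u`. Differentiating
`⟪X, X*⟫ = -1` and using `⟪∂X, N⟫ = 0` shows that every `∂_α X*` is orthogonal to `X`,
so `det(v, ∂X*)` depends on `v` only through `⟪X, v⟫`; this gives
`⟪X, X*⟫ det(N*, ∂X*) = ⟪X, N*⟫ det(X*, ∂X*)`. On the other side
`∂N = φ ∂X* + (∂φ) X*`, and a column operation gives `det(N, ∂N) = φⁿ det(X*, ∂X*)`.
Eliminating `det(X*, ∂X*)` gives the formula.
-/
open Set RealInnerProductSpace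

noncomputable section

/-- The determinant of the `n × n` matrix whose columns are `v 0, …, v (n-1)`. -/
def detCols {n : ℕ} (v : Fin n → EuclideanSpace ℝ (Fin n)) : ℝ :=
  Matrix.det (Matrix.of fun i j => v j i)

/-- The partial derivative `∂_α f (u)` of a map between Euclidean spaces. -/
def pderiv' {m n : ℕ} (f : EuclideanSpace ℝ (Fin m) → EuclideanSpace ℝ (Fin n))
    (u : EuclideanSpace ℝ (Fin m)) (α : Fin m) : EuclideanSpace ℝ (Fin n) :=
  fderiv ℝ f u (EuclideanSpace.single α 1)

section detCols

variable {n m : ℕ}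

theorem detCols_eq_basisFun_det (v : Fin n → EuclideanSpace ℝ (Fin n)) :
    detCols v = (EuclideanSpace.basisFun (Fin n) ℝ).toBasis.det v := by
  rw [Module.Basis.det_apply, detCols]
  congr 1

theorem detCols_smul (r : ℝ) (v : Fin n → EuclideanSpace ℝ (Fin n)) :
    detCols (r • v) = r ^ n * detCols v := by
  rw [detCols_eq_basisFun_det, detCols_eq_basisFun_det, Pi.smul_def,
    AlternatingMap.map_smul_univ]
  simp

theorem detCols_eq_zero_of_forall_inner_eq_zero {a : EuclideanSpace ℝ (Fin n)} (ha : a ≠ 0)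
    {v : Fin n → EuclideanSpace ℝ (Fin n)} (hv : ∀ j, ⟪a, v j⟫ = (0 : ℝ)) :
    detCols v = 0 := by
  rw [detCols, ← Matrix.exists_vecMul_eq_zero_iff]
  refine ⟨a, fun h => ha (WithLp.ofLp_injective 2 h), funext fun j => ?_⟩
  simpa [Matrix.vecMul, dotProduct, PiLp.inner_apply, mul_comm] using hv j

theorem detCols_cons_add_smul (v : EuclideanSpace ℝ (Fin (m + 1)))
    (D : Fin m → EuclideanSpace ℝ (Fin (m + 1))) (c : Fin m → ℝ) :
    detCols (Fin.cons v fun α => D α + c α • v) = detCols (Fin.cons v D) := by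
  rw [detCols, detCols, ← Matrix.det_transpose, ← Matrix.det_transpose (Matrix.of _)]
  refine Matrix.det_eq_of_forall_row_eq_smul_add_const (Fin.cons 0 c) 0 rfl fun i j => ?_
  cases i using Fin.cases <;> simp

theorem inner_mul_detCols_cons_comm {a v w : EuclideanSpace ℝ (Fin (m + 1))}
    {D : Fin m → EuclideanSpace ℝ (Fin (m + 1))} (hD : ∀ α, ⟪a, D α⟫ = (0 : ℝ)) :
    ⟪a, w⟫ * detCols (Fin.cons v D) = ⟪a, v⟫ * detCols (Fin.cons w D) := by
  rcases eq_or_ne a 0 with rfl | ha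
  · simp
  have hdep : detCols (Fin.cons (⟪a, w⟫ • v + (-⟪a, v⟫) • w) D) = 0 := by
    refine detCols_eq_zero_of_forall_inner_eq_zero ha fun j => ?_
    cases j using Fin.cases with
    | zero => simp [inner_add_right, real_inner_smul_right]; ring
    | succ α => simpa using hD α
  simp only [detCols_eq_basisFun_det, ← AlternatingMap.coe_multilinearMap] at hdep ⊢
  rw [MultilinearMap.cons_add, MultilinearMap.cons_smul, MultilinearMap.cons_smul] at hdep
  simp only [smul_eq_mul] at hdep
  linarith

theorem detCols_cons_smul_smul_add_smul {r : ℝ} (hr : r ≠ 0)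
    (v : EuclideanSpace ℝ (Fin (m + 1))) (D : Fin m → EuclideanSpace ℝ (Fin (m + 1)))
    (c : Fin m → ℝ) :
    detCols (Fin.cons (r • v) fun α => r • D α + c α • v) =
      r ^ (m + 1) * detCols (Fin.cons v D) := by
  have hfactor : (Fin.cons (r • v) fun α => r • D α + c α • v :
      Fin (m + 1) → EuclideanSpace ℝ (Fin (m + 1))) =
      r • Fin.cons v fun α => D α + (c α / r) • v := by
    ext j : 1
    cases j using Fin.cases with
    | zero => rfl
    | succ α => simp [smul_add, smul_smul, mul_div_cancel₀ _ hr]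
  rw [hfactor, detCols_smul, detCols_cons_add_smul]

theorem detCols_copolar_of_inner_eq_neg_one {x xs : EuclideanSpace ℝ (Fin (m + 1))}
    {D : Fin m → EuclideanSpace ℝ (Fin (m + 1))} {φ : ℝ} (hφ : φ ≠ 0) (c : Fin m → ℝ)
    (hxs : ⟪x, xs⟫ = (-1 : ℝ)) (hD : ∀ α, ⟪x, D α⟫ = (0 : ℝ)) :
    detCols (Fin.cons (‖x‖⁻¹ • x) D) =
      (-1) ^ (m + 1) / (⟪xs, ‖x‖⁻¹ • x⟫ * (-φ) ^ (m + 1)) *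
        detCols (Fin.cons (φ • xs) fun α => φ • D α + c α • xs) := by
  have hx : ‖x‖ ≠ 0 := by
    rintro hx
    simp [norm_eq_zero.mp hx] at hxs
  have hcomm := inner_mul_detCols_cons_comm (v := ‖x‖⁻¹ • x) (w := xs) hD
  rw [hxs, real_inner_smul_right, real_inner_self_eq_norm_sq] at hcomm
  rw [detCols_cons_smul_smul_add_smul hφ, real_inner_smul_right, real_inner_comm, hxs,
    neg_pow φ]
  generalize detCols (Fin.cons (‖x‖⁻¹ • x) D) = A at hcomm ⊢
  field_simp at hcomm ⊢
  linear_combination -hcomm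

end detCols

theorem inner_fderiv_right_eq_neg_of_eventuallyEq_const {E F : Type*} [NormedAddCommGroup E]
    [NormedSpace ℝ E] [NormedAddCommGroup F] [InnerProductSpace ℝ F] {f g : E → F} {u : E}
    {c : ℝ} (hf : DifferentiableAt ℝ f u) (hg : DifferentiableAt ℝ g u)
    (hc : (fun v => ⟪f v, g v⟫) =ᶠ[nhds u] fun _ => c) (h : E) :
    ⟪f u, fderiv ℝ g u h⟫ = -⟪fderiv ℝ f u h, g u⟫ := by
  have h0 := fderiv_inner_apply ℝ hf hg h
  rw [hc.fderiv_eq, fderiv_const_apply, zero_apply] at h0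
  linarith

theorem det_tangent_copolar_general {m : ℕ}
    (U : Set (EuclideanSpace ℝ (Fin m))) (hU : IsOpen U)
    (X N : EuclideanSpace ℝ (Fin m) → EuclideanSpace ℝ (Fin (m + 1)))
    (hX : ContDiffOn ℝ 1 X U) (hN : ContDiffOn ℝ 1 N U)
    (hOrth : ∀ u ∈ U, ∀ α : Fin m, ⟪N u, pderiv' X u α⟫ = (0 : ℝ))
    (hneg : ∀ u ∈ U, ⟪X u, N u⟫ < (0 : ℝ)) :
    ∀ u ∈ U,
      detCols (Fin.cons (‖X u‖⁻¹ • X u)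
          (fun α => pderiv' (fun v => (-(⟪X v, N v⟫ : ℝ))⁻¹ • N v) u α))
        = (-1) ^ (m + 1) /
            ((⟪(-(⟪X u, N u⟫ : ℝ))⁻¹ • N u, ‖X u‖⁻¹ • X u⟫ : ℝ) *
              (⟪X u, N u⟫ : ℝ) ^ (m + 1)) *
            detCols (Fin.cons (N u) (fun α => pderiv' N u α)) := by
  intro u hu
  set φ : EuclideanSpace ℝ (Fin m) → ℝ := fun v => -⟪X v, N v⟫ with hφ
  set Xs : EuclideanSpace ℝ (Fin m) → EuclideanSpace ℝ (Fin (m + 1)) :=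
    fun v => (φ v)⁻¹ • N v
  have hUu : U ∈ nhds u := hU.mem_nhds hu
  have hXd : DifferentiableAt ℝ X u := (hX.differentiableOn one_ne_zero).differentiableAt hUu
  have hNd : DifferentiableAt ℝ N u := (hN.differentiableOn one_ne_zero).differentiableAt hUu
  have hφd : DifferentiableAt ℝ φ u := (hXd.inner ℝ hNd).neg
  have hφ0 : ∀ v ∈ U, φ v ≠ 0 := fun v hv => (neg_pos.mpr (hneg v hv)).ne'
  have hXsd : DifferentiableAt ℝ Xs u := (hφd.inv (hφ0 u hu)).smul hNd
  have hXXs : ∀ v ∈ U, ⟪X v, Xs v⟫ = (-1 : ℝ) := fun v hv => by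
    rw [real_inner_smul_right, hφ, inv_neg, neg_mul,
      inv_mul_cancel₀ (neg_ne_zero.mp (hφ0 v hv))]
  have hNXs : ∀ v ∈ U, N v = φ v • Xs v := fun v hv => by
    rw [smul_smul, mul_inv_cancel₀ (hφ0 v hv), one_smul]
  have hD : ∀ α, ⟪X u, pderiv' Xs u α⟫ = (0 : ℝ) := fun α => by
    rw [pderiv', inner_fderiv_right_eq_neg_of_eventuallyEq_const hXd hXsd
      (Filter.eventuallyEq_of_mem hUu hXXs), real_inner_smul_right, real_inner_comm,
      ← pderiv', hOrth u hu α, mul_zero, neg_zero]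
  have hDN : ∀ α, pderiv' N u α =
      φ u • pderiv' Xs u α + fderiv ℝ φ u (EuclideanSpace.single α 1) • Xs u := by
    intro α
    rw [pderiv', (Filter.eventuallyEq_of_mem hUu hNXs).fderiv_eq, fderiv_fun_smul hφd hXsd]
    rfl
  rw [show (-⟪X u, N u⟫)⁻¹ • N u = Xs u from rfl,
    show ⟪X u, N u⟫ = -φ u from (neg_neg _).symm, funext hDN, hNXs u hu]
  exact detCols_copolar_of_inner_eq_neg_one (hφ0 u hu) _ (hXXs u hu) hD

/-- With `n = m + 1`: for `C¹` maps `X : U → ℝⁿ \ {0}` and `N : U → ℝⁿ`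
with `‖N‖ = 1`, `⟨N, ∂_α X⟩ = 0` and `⟨X, N⟩ < 0` on the open set `U`, setting
`X* = N/(-⟨X,N⟩)` and `N* = X/‖X‖`, one has
`det(N*, ∂₁X*, …, ∂ₘX*) = (-1)ⁿ/(⟨X*,N*⟩⟨X,N⟩ⁿ) det(N, ∂₁N, …, ∂ₘN)` on `U`. -/
theorem det_tangent_copolar {m : ℕ}
    (U : Set (EuclideanSpace ℝ (Fin m))) (hU : IsOpen U)
    (X N : EuclideanSpace ℝ (Fin m) → EuclideanSpace ℝ (Fin (m + 1)))
    (hX : ContDiffOn ℝ 1 X U) (hN : ContDiffOn ℝ 1 N U)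
    (hX0 : ∀ u ∈ U, X u ≠ 0)
    (hNnorm : ∀ u ∈ U, ‖N u‖ = 1)
    (hOrth : ∀ u ∈ U, ∀ α : Fin m, ⟪N u, pderiv' X u α⟫ = (0 : ℝ))
    (hneg : ∀ u ∈ U, ⟪X u, N u⟫ < (0 : ℝ)) :
    ∀ u ∈ U,
      detCols (Fin.cons (‖X u‖⁻¹ • X u)
          (fun α => pderiv' (fun v => (-(⟪X v, N v⟫ : ℝ))⁻¹ • N v) u α))
        = (-1) ^ (m + 1) /
            ((⟪(-(⟪X u, N u⟫ : ℝ))⁻¹ • N u, ‖X u‖⁻¹ • X u⟫ : ℝ) *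
              (⟪X u, N u⟫ : ℝ) ^ (m + 1)) *
            detCols (Fin.cons (N u) (fun α => pderiv' N u α)) :=
  det_tangent_copolar_general U hU X N hX hN hOrth hneg
end
end
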